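/- Let p ≥ 5 be a prime and let 𝔪 be a prime ideal of O_K with 𝔪 ∤ 2·A·B·C such that v_𝔪(a) ≥ 1, v_𝔪(b) ≥ 1 and v_𝔪(c) ≥ 1. Then the j-invariant j of the Frey curve satisfies: either v_𝔪(j) ≥ 0, or p divides v_𝔪(j). -/

import Mathlib

open NumberField

open scoped Classical in
/-- The additive (normalized) `P`-adic valuation on a number field `K`, with `v_P(0) = 0`
by convention. -/
noncomputable def addVal {K : Type*} [Field K] [NumberField K]
    (P : IsDedekindDomain.HeightOneSpectrum (𝓞 K)) (x : K) : ℤ :=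
  if hx : x = 0 then 0
  else - Multiplicative.toAdd (WithZero.unzero ((P.valuation (K := K)).ne_zero_iff.mpr hx))

/-- The Frey curve `Y² = X (X - A aᵖ) (X + B bᵖ)`, written in standard Weierstrass form
`Y² = X³ + (B bᵖ - A aᵖ) X² - (A aᵖ) (B bᵖ) X`. -/
noncomputable def freyCurve {K : Type*} [Field K] [NumberField K]
    (A B a b : 𝓞 K) (p : ℕ) : WeierstrassCurve K where
  a₁ := 0
  a₂ := algebraMap (𝓞 K) K (B * b ^ p - A * a ^ p)
  a₃ := 0
  a₄ := algebraMap (𝓞 K) K (-(A * a ^ p * (B * b ^ p)))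
  a₆ := 0

section helpers
variable {K : Type*} [Field K] [NumberField K] (M : IsDedekindDomain.HeightOneSpectrum (𝓞 K))

lemma addVal_coe {x : K} (hx : x ≠ 0) :
    M.valuation K x = ((Multiplicative.ofAdd (-addVal M x) : Multiplicative ℤ) : WithZero (Multiplicative ℤ)) := by
  rw [addVal, dif_neg hx, neg_neg, ofAdd_toAdd, WithZero.coe_unzero]

lemma addVal_eq_iff {x : K} (hx : x ≠ 0) {n : ℤ} :
    addVal M x = n ↔ M.valuation K x = ((Multiplicative.ofAdd (-n) : Multiplicative ℤ) : WithZero (Multiplicative ℤ)) := by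
  rw [addVal_coe M hx]
  constructor
  · rintro rfl; rfl
  · intro h
    have := Multiplicative.ofAdd.injective (WithZero.coe_inj.mp h)
    omega

lemma addVal_mul {x y : K} (hx : x ≠ 0) (hy : y ≠ 0) :
    addVal M (x * y) = addVal M x + addVal M y := by
  rw [addVal_eq_iff M (mul_ne_zero hx hy), map_mul, addVal_coe M hx, addVal_coe M hy,
    ← WithZero.coe_mul, ← ofAdd_add, neg_add]

lemma addVal_pow {x : K} (hx : x ≠ 0) (n : ℕ) :
    addVal M (x ^ n) = n * addVal M x := by
  induction n with
  | zero => simp [addVal_eq_iff M (one_ne_zero), map_one]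
  | succ n ih =>
    rw [pow_succ, addVal_mul M (pow_ne_zero n hx) hx, ih]
    push_cast; ring

lemma addVal_neg {x : K} (hx : x ≠ 0) : addVal M (-x) = addVal M x := by
  rw [addVal_eq_iff M (neg_ne_zero.mpr hx), Valuation.map_neg, ← addVal_coe M hx]

lemma addVal_div {x y : K} (hx : x ≠ 0) (hy : y ≠ 0) :
    addVal M (x / y) = addVal M x - addVal M y := by
  have h : x / y * y = x := div_mul_cancel₀ x hy
  have := addVal_mul M (div_ne_zero hx hy) hy
  rw [h] at this; omega

lemma addVal_nonneg_int {x : 𝓞 K} (hx : x ≠ 0) :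
    0 ≤ addVal M (algebraMap (𝓞 K) K x) := by
  have hx' : algebraMap (𝓞 K) K x ≠ 0 := by
    simpa using (map_ne_zero_iff _ (FaithfulSMul.algebraMap_injective (𝓞 K) K)).mpr hx
  have h1 := M.valuation_le_one (K := K) x
  rw [addVal_coe M hx'] at h1
  by_contra h
  push_neg at h
  have : (1 : WithZero (Multiplicative ℤ)) < Multiplicative.ofAdd (-addVal M (algebraMap (𝓞 K) K x)) := by
    rw [← WithZero.coe_one]
    rw [WithZero.coe_lt_coe]
    rw [← ofAdd_zero, Multiplicative.ofAdd_lt]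
    omega
  exact absurd h1 (not_le.mpr this)

lemma addVal_eq_zero_of_not_mem {x : 𝓞 K} (hx : x ∉ M.asIdeal) :
    addVal M (algebraMap (𝓞 K) K x) = 0 := by
  have hx0 : x ≠ 0 := fun h => hx (h ▸ M.asIdeal.zero_mem)
  have hx' : algebraMap (𝓞 K) K x ≠ 0 :=
    (map_ne_zero_iff _ (FaithfulSMul.algebraMap_injective _ _)).mpr hx0
  have h1 := M.valuation_le_one (K := K) x
  have h2 : ¬ M.valuation K (algebraMap (𝓞 K) K x) < 1 := by
    rw [M.valuation_lt_one_iff_dvd, Ideal.dvd_span_singleton]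
    exact hx
  have heq : M.valuation K (algebraMap (𝓞 K) K x) = 1 := le_antisymm h1 (not_lt.mp h2)
  rw [addVal_eq_iff M hx', heq, neg_zero, ofAdd_zero, WithZero.coe_one]

lemma addVal_lt_iff {x y : K} (hx : x ≠ 0) (hy : y ≠ 0) :
    M.valuation K x < M.valuation K y ↔ addVal M y < addVal M x := by
  rw [addVal_coe M hx, addVal_coe M hy, WithZero.coe_lt_coe, Multiplicative.ofAdd_lt]
  omega

lemma addVal_le_iff {x y : K} (hx : x ≠ 0) (hy : y ≠ 0) :
    M.valuation K x ≤ M.valuation K y ↔ addVal M y ≤ addVal M x := by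
  rw [addVal_coe M hx, addVal_coe M hy, WithZero.coe_le_coe, Multiplicative.ofAdd_le]
  omega

lemma addVal_add_eq_left {x y : K} (hx : x ≠ 0) (hy : y ≠ 0)
    (h : addVal M x < addVal M y) : addVal M (x + y) = addVal M x := by
  have hvy : M.valuation K y < M.valuation K x := (addVal_lt_iff M hy hx).mpr h
  have hxy : x + y ≠ 0 := by
    intro h0
    have hy' : y = -x := by linear_combination h0
    rw [hy', Valuation.map_neg] at hvy
    exact lt_irrefl _ hvy
  have := Valuation.map_add_of_distinct_val (M.valuation (K := K)) (x := x) (y := y) (ne_of_gt hvy)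
  rw [max_eq_left (le_of_lt hvy)] at this
  rw [addVal_eq_iff M hxy, this, ← addVal_coe M hx]

lemma addVal_add_ge {x y : K} (hx : x ≠ 0) (hy : y ≠ 0) (hxy : x + y ≠ 0) :
    min (addVal M x) (addVal M y) ≤ addVal M (x + y) := by
  have h := Valuation.map_add (M.valuation (K := K)) x y
  rcases le_or_gt (M.valuation K x) (M.valuation K y) with h' | h'
  · rw [max_eq_right h'] at h
    exact le_trans (min_le_right _ _) ((addVal_le_iff M hxy hy).mp h)
  · rw [max_eq_left (le_of_lt h')] at h
    exact le_trans (min_le_left _ _) ((addVal_le_iff M hxy hx).mp h)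

end helpers

/-- If `p ≥ 5` is prime, `𝔪 ∤ 2 A B C` and `a, b, c` all lie in `𝔪`, then the j-invariant
of the Frey curve satisfies `v_𝔪(j) ≥ 0` or `p ∣ v_𝔪(j)`. -/
theorem frey_valuation_j_at_m {K : Type*} [Field K] [NumberField K]
    (A B C a b c : 𝓞 K) (hA : A ≠ 0) (hB : B ≠ 0) (hC : C ≠ 0)
    (habc : a * b * c ≠ 0) (p : ℕ) (hp : p.Prime) (hp5 : 5 ≤ p)
    (hFermat : A * a ^ p + B * b ^ p + C * c ^ p = 0)
    (M : IsDedekindDomain.HeightOneSpectrum (𝓞 K))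
    (hM : 2 * (A * B * C) ∉ M.asIdeal)
    (ha : 1 ≤ addVal M (algebraMap (𝓞 K) K a))
    (hb : 1 ≤ addVal M (algebraMap (𝓞 K) K b))
    (hc : 1 ≤ addVal M (algebraMap (𝓞 K) K c))
    (j : K) (hj : j = (freyCurve A B a b p).c₄ ^ 3 / (freyCurve A B a b p).Δ) :
    0 ≤ addVal M j ∨ (p : ℤ) ∣ addVal M j := by
  by_cases hj0 : j = 0
  · left; simp [hj0, addVal]
  have inj : Function.Injective (algebraMap (𝓞 K) K) :=
    FaithfulSMul.algebraMap_injective _ _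
  have ha0 : a ≠ 0 := fun h => habc (by simp [h])
  have hb0 : b ≠ 0 := fun h => habc (by simp [h])
  have hc0 : c ≠ 0 := fun h => habc (by simp [h])
  set φ := algebraMap (𝓞 K) K with hφ
  have hmap : ∀ x : 𝓞 K, x ≠ 0 → φ x ≠ 0 := fun x hx => (map_ne_zero_iff φ inj).mpr hx
  set u : K := φ A * φ a ^ p with hu_def
  set v : K := φ B * φ b ^ p with hv_def
  set w : K := φ C * φ c ^ p with hw_def
  have hu : u ≠ 0 := mul_ne_zero (hmap A hA) (pow_ne_zero _ (hmap a ha0))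
  have hv : v ≠ 0 := mul_ne_zero (hmap B hB) (pow_ne_zero _ (hmap b hb0))
  have hw : w ≠ 0 := mul_ne_zero (hmap C hC) (pow_ne_zero _ (hmap c hc0))
  have hF : u + v + w = 0 := by
    have := congrArg φ hFermat
    simpa [map_add, map_mul, map_pow] using this
  -- ideal membership facts
  have hAM : A ∉ M.asIdeal := fun h => hM (by
    have : 2 * (A * B * C) = (2 * B * C) * A := by ring
    rw [this]; exact Ideal.mul_mem_left _ _ h)
  have hBM : B ∉ M.asIdeal := fun h => hM (by
    have : 2 * (A * B * C) = (2 * A * C) * B := by ring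
    rw [this]; exact Ideal.mul_mem_left _ _ h)
  have hCM : C ∉ M.asIdeal := fun h => hM (by
    have : 2 * (A * B * C) = (2 * A * B) * C := by ring
    rw [this]; exact Ideal.mul_mem_left _ _ h)
  have h2M : (2 : 𝓞 K) ∉ M.asIdeal := fun h => hM (Ideal.mul_mem_right _ _ h)
  have h16M : (16 : 𝓞 K) ∉ M.asIdeal := by
    intro h
    have h16 : (2 : 𝓞 K) ^ 4 ∈ M.asIdeal := by norm_num at h ⊢; exact h
    exact h2M (M.isPrime.mem_of_pow_mem 4 h16)
  have h16K : (16 : K) = φ (16 : 𝓞 K) := by rw [hφ, map_ofNat]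
  have h16ne : (16 : K) ≠ 0 := by norm_num
  have hv16 : addVal M (16 : K) = 0 := by
    rw [h16K]; exact addVal_eq_zero_of_not_mem M h16M
  set α := addVal M (φ a) with hα
  set β := addVal M (φ b) with hβ
  set γ := addVal M (φ c) with hγ
  have hvu : addVal M u = p * α := by
    rw [hu_def, addVal_mul M (hmap A hA) (pow_ne_zero _ (hmap a ha0)),
      addVal_pow M (hmap a ha0), addVal_eq_zero_of_not_mem M hAM, zero_add]
  have hvv : addVal M v = p * β := by
    rw [hv_def, addVal_mul M (hmap B hB) (pow_ne_zero _ (hmap b hb0)),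
      addVal_pow M (hmap b hb0), addVal_eq_zero_of_not_mem M hBM, zero_add]
  have hvw : addVal M w = p * γ := by
    rw [hw_def, addVal_mul M (hmap C hC) (pow_ne_zero _ (hmap c hc0)),
      addVal_pow M (hmap c hc0), addVal_eq_zero_of_not_mem M hCM, zero_add]
  -- Δ and c₄ identities
  have hΔ : (freyCurve A B a b p).Δ = 16 * (u * v * w) ^ 2 := by
    simp only [freyCurve, WeierstrassCurve.Δ, WeierstrassCurve.b₂, WeierstrassCurve.b₄,
      WeierstrassCurve.b₆, WeierstrassCurve.b₈, map_sub, map_mul, map_pow, map_neg]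
    linear_combination (16 * u ^ 2 * v ^ 2 * (u + v - w)) * hF
  have hc₄ : (freyCurve A B a b p).c₄ = 16 * (w ^ 2 - u * v) := by
    simp only [freyCurve, WeierstrassCurve.c₄, WeierstrassCurve.b₂, WeierstrassCurve.b₄,
      map_sub, map_mul, map_pow, map_neg]
    linear_combination (16 * (u + v - w)) * hF
  have hΔ0 : (freyCurve A B a b p).Δ ≠ 0 := by
    rw [hΔ]
    exact mul_ne_zero (by norm_num) (pow_ne_zero _ (mul_ne_zero (mul_ne_zero hu hv) hw))
  have hc₄0 : (freyCurve A B a b p).c₄ ≠ 0 := by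
    intro h
    exact hj0 (by rw [hj, h]; simp)
  have hX0 : w ^ 2 - u * v ≠ 0 := by
    intro h; apply hc₄0; rw [hc₄, h, mul_zero]
  have hvΔ : addVal M ((freyCurve A B a b p).Δ) = 2 * (p * α + p * β + p * γ) := by
    rw [hΔ, addVal_mul M h16ne (pow_ne_zero _ (mul_ne_zero (mul_ne_zero hu hv) hw)),
      addVal_pow M (mul_ne_zero (mul_ne_zero hu hv) hw),
      addVal_mul M (mul_ne_zero hu hv) hw, addVal_mul M hu hv, hvu, hvv, hvw, hv16]
    push_cast; ring
  have hvc₄X : addVal M ((freyCurve A B a b p).c₄) = addVal M (w ^ 2 - u * v) := by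
    rw [hc₄, addVal_mul M h16ne hX0, hv16, zero_add]
  have hvj : addVal M j = 3 * addVal M ((freyCurve A B a b p).c₄)
      - addVal M ((freyCurve A B a b p).Δ) := by
    rw [hj, addVal_div M (pow_ne_zero _ hc₄0) hΔ0, addVal_pow M hc₄0]
    push_cast; ring
  have hvw2 : addVal M (w ^ 2) = 2 * (p * γ) := by
    rw [addVal_pow M hw, hvw]; push_cast; ring
  have hvuv : addVal M (-(u * v)) = p * α + p * β := by
    rw [addVal_neg M (mul_ne_zero hu hv), addVal_mul M hu hv, hvu, hvv]
  have hsub : w ^ 2 - u * v = w ^ 2 + -(u * v) := by ring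
  have hw2 : w ^ 2 ≠ 0 := pow_ne_zero _ hw
  have huv : -(u * v) ≠ 0 := neg_ne_zero.mpr (mul_ne_zero hu hv)
  rcases lt_trichotomy (2 * ((p : ℤ) * γ)) ((p : ℤ) * α + p * β) with hlt | heq | hgt
  · -- w² dominates
    have hX : addVal M (w ^ 2 - u * v) = 2 * ((p : ℤ) * γ) := by
      rw [hsub, addVal_add_eq_left M hw2 huv (by rw [hvw2, hvuv]; exact hlt), hvw2]
    right
    refine ⟨4 * γ - 2 * α - 2 * β, ?_⟩
    rw [hvj, hvc₄X, hX, hvΔ]; ring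
  · -- equal valuations: addVal X ≥ 2pγ
    left
    have hmin := addVal_add_ge M hw2 huv (by rw [← hsub]; exact hX0)
    rw [hvw2, hvuv, ← heq, min_self] at hmin
    rw [← hsub] at hmin
    rw [hvj, hvc₄X, hvΔ]
    have : (p : ℤ) * α + p * β = 2 * (p * γ) := heq.symm
    linarith
  · -- uv dominates
    have hX : addVal M (w ^ 2 - u * v) = (p : ℤ) * α + p * β := by
      rw [hsub, add_comm, addVal_add_eq_left M huv hw2 (by rw [hvw2, hvuv]; exact hgt), hvuv]
    right
    refine ⟨α + β - 2 * γ, ?_⟩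
    rw [hvj, hvc₄X, hX, hvΔ]; ring
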